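/- Let G be a finite graph on n vertices, W ⊆ V(G), and (X, (T, bag)) a torso tree decomposition in G of width k that covers W. Let d : V(G) → {1, …, n} be a weight function, let t be a node of T, and let S be a (bag(t), W)-separator witnessing that bag(t) is not d-linked into W (i.e., |S| < |bag(t)|, or |S| = |bag(t)| and d(S) < d(bag(t))). Then there exists a torso tree decomposition (X', (T', bag')) in G that covers W, has width at most k, has at most |V(T)| nodes, and satisfies φ_d(X') < φ_d(X), where φ_d(Z) = |Z|·n·(k+1) + d(Z). -/

import Mathlib

open SimpleGraph

variable {V ι : Type*}

/-- The torso of `G` on a vertex set `X`: vertices `u ≠ v` of `X` are adjacent iff there is a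
`u`–`v` walk in `G` all of whose internal vertices lie outside `X`. -/
def torsoGraph (G : SimpleGraph V) (X : Set V) : SimpleGraph V where
  Adj u v := u ≠ v ∧ u ∈ X ∧ v ∈ X ∧
    ∃ p : G.Walk u v, ∀ w ∈ p.support, w = u ∨ w = v ∨ w ∉ X
  symm := by
    constructor
    rintro u v ⟨hne, hu, hv, p, hp⟩
    refine ⟨hne.symm, hv, hu, p.reverse, ?_⟩
    intro w hw
    rw [SimpleGraph.Walk.support_reverse, List.mem_reverse] at hw
    rcases hp w hw with h | h | h
    · exact Or.inr (Or.inl h)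
    · exact Or.inl h
    · exact Or.inr (Or.inr h)
  loopless := ⟨fun _ h => h.1 rfl⟩

/-- `(T, bag)` is a tree decomposition of `G`. -/
structure IsTreeDecomp (G : SimpleGraph V) (T : SimpleGraph ι) (bag : ι → Set V) : Prop where
  tree : T.IsTree
  mem_bag : ∀ v : V, ∃ t, v ∈ bag t
  edge_bag : ∀ ⦃u v : V⦄, G.Adj u v → ∃ t, u ∈ bag t ∧ v ∈ bag t
  conn : ∀ v : V, (T.induce {t | v ∈ bag t}).Connected

/-- `(X, (T, bag))` is a torso tree decomposition in `G`, i.e. `(T, bag)` is a tree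
decomposition of `torsoGraph G X`. -/
structure IsTorsoTreeDecomp (G : SimpleGraph V) (X : Set V)
    (T : SimpleGraph ι) (bag : ι → Set V) : Prop where
  tree : T.IsTree
  bag_subset : ∀ t, bag t ⊆ X
  mem_bag : ∀ v ∈ X, ∃ t, v ∈ bag t
  edge_bag : ∀ ⦃u v : V⦄, (torsoGraph G X).Adj u v → ∃ t, u ∈ bag t ∧ v ∈ bag t
  conn : ∀ v ∈ X, (T.induce {t | v ∈ bag t}).Connected

/-- `G` has treewidth at most `k`. -/
def HasTreewidthAtMost (G : SimpleGraph V) (k : ℕ) : Prop :=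
  ∃ (n : ℕ) (T : SimpleGraph (Fin n)) (bag : Fin n → Set V),
    IsTreeDecomp G T bag ∧ ∀ t, (bag t).ncard ≤ k + 1

/-- `S` is an `(X, Y)`-separator in `G`: every walk from `X` to `Y` meets `S`. -/
def IsSep (G : SimpleGraph V) (X Y S : Set V) : Prop :=
  ∀ ⦃x y : V⦄, x ∈ X → y ∈ Y → ∀ p : G.Walk x y, ∃ s ∈ S, s ∈ p.support

/-- The maximum number of vertex-disjoint `X`–`Y` paths; by Menger's theorem this equals the
minimum size of an `(X, Y)`-separator, which is how we define it. -/
noncomputable def flowG (G : SimpleGraph V) (X Y : Set V) : ℕ :=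
  sInf (Set.ncard '' {S : Set V | IsSep G X Y S})

/-- `X` is linked into `Y`. -/
def LinkedInto (G : SimpleGraph V) (X Y : Set V) : Prop :=
  flowG G X Y = X.ncard

/-- `X` is strictly linked into `Y`. -/
def StrictlyLinkedInto (G : SimpleGraph V) (X Y : Set V) : Prop :=
  LinkedInto G X Y ∧
    ∀ S : Set V, IsSep G X Y S → S.ncard = X.ncard → S = X ∨ S = Y

/-- `R_G(X, S)`: the set of vertices of `G \ S` reachable from `X \ S`. -/
def reachG (G : SimpleGraph V) (X S : Set V) : Set V :=
  {v | ∃ x ∈ X, x ∉ S ∧ ∃ p : G.Walk x v, ∀ w ∈ p.support, w ∉ S}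

/-- `S` is a minimal `(X, Y)`-separator. -/
def IsMinimalSep (G : SimpleGraph V) (X Y S : Set V) : Prop :=
  IsSep G X Y S ∧ ∀ S' : Set V, S' ⊂ S → ¬ IsSep G X Y S'

/-- `S` is an important `(A, B)`-separator. -/
def IsImportantSep (G : SimpleGraph V) (A B S : Set V) : Prop :=
  IsMinimalSep G A B S ∧
    ¬ ∃ S' : Set V, IsSep G A B S' ∧ S'.ncard ≤ S.ncard ∧ reachG G A S ⊂ reachG G A S'

/-- The important `(A, B)`-separator `S'` dominates the `(A, B)`-separator `S`. -/
def DominatesSep (G : SimpleGraph V) (A B S S' : Set V) : Prop :=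
  IsImportantSep G A B S' ∧ S'.ncard ≤ S.ncard ∧ reachG G A S ⊆ reachG G A S'

/-- `(A, S, B)` is a separation of `G`. -/
structure IsSeparation (G : SimpleGraph V) (A S B : Set V) : Prop where
  disjoint_AS : Disjoint A S
  disjoint_AB : Disjoint A B
  disjoint_SB : Disjoint S B
  union_eq : A ∪ S ∪ B = Set.univ
  no_adj : ∀ ⦃a b : V⦄, a ∈ A → b ∈ B → ¬ G.Adj a b

open Classical in
/-- The flow potential `flp_G(X, Y)`. -/
noncomputable def flpG (G : SimpleGraph V) (X Y : Set V) : ℕ :=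
  if X = Set.univ then X.ncard
  else sInf {n : ℕ | ∃ A S B : Set V, IsSeparation G A S B ∧
    X ⊆ A ∪ S ∧ Y ⊆ B ∪ S ∧ B.Nonempty ∧ S.ncard = n}

/-- The graph consisting of a clique on `S` (and no other edges). -/
def cliqueOn (S : Set V) : SimpleGraph V where
  Adj u v := u ≠ v ∧ u ∈ S ∧ v ∈ S
  symm := ⟨fun _ _ ⟨h, hu, hv⟩ => ⟨h.symm, hv, hu⟩⟩
  loopless := ⟨fun _ h => h.1 rfl⟩

/-- `G ⊗ S`: the graph obtained from `G` by making `S` a clique. -/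
def addCliqueG (G : SimpleGraph V) (S : Set V) : SimpleGraph V := G ⊔ cliqueOn S

/-- `(G, Ws, k)` is an instance of Partitioned Subset Treewidth: `Ws` is a finite nonempty
family of terminal cliques, `k ≥ 1`, each terminal clique being a clique of `G` of size at
most `k + 1`. -/
def IsPSTWInstance (G : SimpleGraph V) (Ws : Set (Set V)) (k : ℕ) : Prop :=
  Ws.Finite ∧ Ws.Nonempty ∧ 1 ≤ k ∧ ∀ W ∈ Ws, G.IsClique W ∧ W.ncard ≤ k + 1

/-- `(X, (T, bag))` is a solution of the instance `(G, Ws, k)`. -/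
def IsSolutionTD (G : SimpleGraph V) (Ws : Set (Set V)) (k : ℕ)
    (X : Set V) (T : SimpleGraph ι) (bag : ι → Set V) : Prop :=
  IsTorsoTreeDecomp G X T bag ∧ ⋃₀ Ws ⊆ X ∧ ∀ t, (bag t).ncard ≤ k + 1

/-- The instance `(G, Ws, k)` is a yes-instance. -/
def IsYesInstance (G : SimpleGraph V) (Ws : Set (Set V)) (k : ℕ) : Prop :=
  ∃ (κ : Type) (T : SimpleGraph κ) (bag : κ → Set V) (X : Set V),
    IsSolutionTD G Ws k X T bag

/-- `W̄_I(W)`: the union of the terminal cliques other than `W`. -/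
def otherUnion (Ws : Set (Set V)) (W : Set V) : Set V := ⋃₀ (Ws \ {W})

/-- `flp_I(W) = flp_G(W, W̄_I(W))`. -/
noncomputable def flpInst (G : SimpleGraph V) (Ws : Set (Set V)) (W : Set V) : ℕ :=
  flpG G W (otherUnion Ws W)

/-- `(A, S, B)` is a safe separation of the instance `(G, Ws, k)`. -/
def IsSafeSeparation (G : SimpleGraph V) (Ws : Set (Set V)) (A S B : Set V) : Prop :=
  IsSeparation G A S B ∧ A.Nonempty ∧ B.Nonempty ∧
    ∃ Wa ∈ Ws, ∃ Wb ∈ Ws,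
      LinkedInto G S ((A ∪ S) ∩ Wa) ∧ LinkedInto G S ((B ∪ S) ∩ Wb)

/-- `Ws ◁ (A, S)`: remove the terminal cliques not meeting `A`, then insert `S` if no superset
of `S` is present. -/
def restrictCliques (Ws : Set (Set V)) (A S : Set V) : Set (Set V) :=
  {W ∈ Ws | (W ∩ A).Nonempty} ∪
    {W | W = S ∧ ¬ ∃ W' ∈ Ws, (W' ∩ A).Nonempty ∧ S ⊆ W'}

/-- `G ◁ (A, S) = G[A ∪ S] ⊗ S`, as a graph on the vertex set `A ∪ S`. -/
def restrictGraph (G : SimpleGraph V) (A S : Set V) : SimpleGraph ↥(A ∪ S) :=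
  addCliqueG (G.induce (A ∪ S)) (Subtype.val ⁻¹' S)

/-- The terminal cliques of `I ◁ (A, S)`, viewed as subsets of the vertex set `A ∪ S`. -/
def restrictSets (Ws : Set (Set V)) (A S : Set V) : Set (Set ↥(A ∪ S)) :=
  (fun W => Subtype.val ⁻¹' W) '' restrictCliques Ws A S

/-- The terminal cliques of `I × (Wi, Wj)`. -/
def mergeCliques (Ws : Set (Set V)) (Wi Wj : Set V) : Set (Set V) :=
  insert (Wi ∪ Wj) (Ws \ {Wi, Wj})

/-- The terminal cliques of `I + (W, ·)`, replacing `W` by `W'`. -/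
def replaceClique (Ws : Set (Set V)) (W W' : Set V) : Set (Set V) :=
  insert W' (Ws \ {W})

/-- The instance `(G, Ws, k)` is maximally merged. -/
def MaximallyMerged (G : SimpleGraph V) (Ws : Set (Set V)) (k : ℕ) : Prop :=
  ∀ Wi ∈ Ws, ∀ Wj ∈ Ws, Wi ≠ Wj → (Wi ∪ Wj).ncard ≤ k + 1 →
    ¬ IsYesInstance (addCliqueG G (Wi ∪ Wj)) (mergeCliques Ws Wi Wj) k

/-- `Wi` is a potential forget-clique of the instance `(G, Ws, k)`. -/
def IsPotentialForgetClique (G : SimpleGraph V) (Ws : Set (Set V)) (k : ℕ)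
    (Wi : Set V) : Prop :=
  ∃ (κ : Type) (T : SimpleGraph κ) (bag : κ → Set V) (X : Set V),
    IsSolutionTD G Ws k X T bag ∧
    ∃ l p : κ, T.Adj l p ∧ (∀ q, T.Adj l q → q = p) ∧
      Wi ⊆ bag l ∧ ∃ w ∈ Wi \ otherUnion Ws Wi, bag p = bag l \ {w}

/-- The disjoint union of two trees together with one extra edge between `a` and `b`. -/
def glueTrees {ι₁ ι₂ : Type*} (T₁ : SimpleGraph ι₁) (T₂ : SimpleGraph ι₂)
    (a : ι₁) (b : ι₂) : SimpleGraph (ι₁ ⊕ ι₂) where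
  Adj x y :=
    (∃ u v, T₁.Adj u v ∧ x = Sum.inl u ∧ y = Sum.inl v) ∨
    (∃ u v, T₂.Adj u v ∧ x = Sum.inr u ∧ y = Sum.inr v) ∨
    (x = Sum.inl a ∧ y = Sum.inr b) ∨
    (x = Sum.inr b ∧ y = Sum.inl a)
  symm := by
    constructor
    rintro x y (⟨u, v, h, rfl, rfl⟩ | ⟨u, v, h, rfl, rfl⟩ | ⟨rfl, rfl⟩ | ⟨rfl, rfl⟩)
    · exact Or.inl ⟨v, u, h.symm, rfl, rfl⟩
    · exact Or.inr (Or.inl ⟨v, u, h.symm, rfl, rfl⟩)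
    · exact Or.inr (Or.inr (Or.inr ⟨rfl, rfl⟩))
    · exact Or.inr (Or.inr (Or.inl ⟨rfl, rfl⟩))
  loopless := by
    constructor
    rintro x (⟨u, v, h, rfl, he⟩ | ⟨u, v, h, rfl, he⟩ | ⟨rfl, he⟩ | ⟨rfl, he⟩)
    · exact h.ne (Sum.inl.inj he)
    · exact h.ne (Sum.inr.inj he)
    · exact Sum.inl_ne_inr he
    · exact Sum.inr_ne_inl he

/-- The sum of the weights `d` over the set `S`. -/
noncomputable def setSum [Finite V] (d : V → ℕ) (S : Set V) : ℕ :=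
  ∑ v ∈ S.toFinite.toFinset, d v

/-!
Choose a `(bag t, W)`-separator `S₀` minimising `(|S₀|, d(S₀))` lexicographically; it is still a
witness. As `|S₀|` is minimum, Menger's theorem (via Göring's edge-deletion argument) links
`bag t` onto `S₀` by disjoint walks that meet `S₀` only at their ends. Let `R` be the part of
`G - S₀` reachable from `W` and `X' = (X ∩ R) ∪ S₀`; cut every bag down to `R` and add each
`s ∈ S₀` to the bags met by its walk. This is a torso tree decomposition on the same tree, and no
bag grows: where the walk of `s` enters a bag not containing `s`, it does so at a vertex on the
`bag t` side of `S₀`, which has left the bag, and distinct walks give distinct such vertices.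
With `φ(Z) = ∑_{v ∈ Z} (n(k+1) + d v)`, the bounds `|bag t| ≤ k + 1` and `d ≤ n` make `φ` respect
the lexicographic order, so `φ(X') ≤ φ(X ∩ R) + φ(S₀) < φ(X ∩ R) + φ(bag t) ≤ φ(X)`.
-/

section Reach

variable {G : SimpleGraph V} {X Y S Z : Set V}

lemma notMem_of_mem_reachG {v : V} (hv : v ∈ reachG G X S) : v ∉ S := by
  obtain ⟨_, _, _, p, hp⟩ := hv
  exact hp v p.end_mem_support

lemma mem_reachG_of_mem {x : V} (hx : x ∈ X) (hxS : x ∉ S) : x ∈ reachG G X S :=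
  ⟨x, hx, hxS, .nil, by simpa using hxS⟩

lemma reachG_mono_left (h : X ⊆ Y) : reachG G X S ⊆ reachG G Y S :=
  fun _ ⟨x, hx, hxS, p, hp⟩ => ⟨x, h hx, hxS, p, hp⟩

lemma reachG_anti_right (h : S ⊆ Z) : reachG G X Z ⊆ reachG G X S :=
  fun _ ⟨x, hx, hxZ, p, hp⟩ => ⟨x, hx, fun hxS => hxZ (h hxS), p, fun u hu huS => hp u hu (h huS)⟩

lemma mem_reachG_of_walk {v w : V} (hv : v ∈ reachG G X S) (p : G.Walk v w)
    (hp : ∀ u ∈ p.support, u ∉ S) : w ∈ reachG G X S := by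
  obtain ⟨x, hx, hxS, q, hq⟩ := hv
  refine ⟨x, hx, hxS, q.append p, fun u hu => ?_⟩
  rcases (Walk.mem_support_append_iff _ _).1 hu with hu | hu
  exacts [hq u hu, hp u hu]

lemma mem_reachG_of_adj {v w : V} (hv : v ∈ reachG G X S) (h : G.Adj v w) (hw : w ∉ S) :
    w ∈ reachG G X S :=
  mem_reachG_of_walk hv h.toWalk <| by
    simpa [Walk.support_cons] using ⟨notMem_of_mem_reachG hv, hw⟩

lemma reachG_singleton_subset {v : V} (hv : v ∈ reachG G X S) : reachG G {v} S ⊆ reachG G X S := by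
  rintro w ⟨x, rfl, -, p, hp⟩
  exact mem_reachG_of_walk hv p hp

lemma mem_reachG_of_mem_support {x v w : V} (hx : x ∈ X) (p : G.Walk x v)
    (hp : ∀ u ∈ p.support, u ∉ S) (hw : w ∈ p.support) : w ∈ reachG G X S := by
  classical
  exact ⟨x, hx, hp x p.start_mem_support, p.takeUntil w hw,
    fun u hu => hp u (p.support_takeUntil_subset_support hw hu)⟩

lemma reachG_subset_of_closed {U : Set V} (hX : X \ S ⊆ U)
    (hU : ∀ ⦃u v⦄, u ∈ U → G.Adj u v → v ∉ S → v ∈ U) : reachG G X S ⊆ U := by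
  have key : ∀ {u v : V} (p : G.Walk u v), u ∈ U → (∀ w ∈ p.support, w ∉ S) → v ∈ U := by
    intro u v p
    induction p with
    | nil => exact fun hu _ => hu
    | cons h p ih =>
      intro hu hp
      simp only [Walk.support_cons, List.mem_cons, forall_eq_or_imp] at hp
      exact ih (hU hu h (hp.2 _ p.start_mem_support)) hp.2
  rintro v ⟨x, hx, hxS, p, hp⟩
  exact key p (hX ⟨hx, hxS⟩) hp

lemma reachG_subset_reachG_of_disjoint (h : Disjoint (reachG G X Z) S) :
    reachG G X Z ⊆ reachG G X S := by
  rintro v ⟨x, hx, hxZ, p, hp⟩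
  have hall : ∀ w ∈ p.support, w ∉ S := fun w hw =>
    Set.disjoint_left.1 h (mem_reachG_of_mem_support hx p hp hw)
  exact ⟨x, hx, hall x p.start_mem_support, p, hall⟩

lemma IsSep.symm (h : IsSep G X Y S) : IsSep G Y X S := fun _ _ hy hx p => by
  simpa using h hx hy p.reverse

lemma IsSep.disjoint_reachG (h : IsSep G X Y S) : Disjoint (reachG G X S) Y := by
  refine Set.disjoint_left.2 fun y ⟨x, hx, _, p, hp⟩ hy => ?_
  obtain ⟨s, hs, hsp⟩ := h hx hy p
  exact hp s hsp hs

lemma IsSep.disjoint_reachG_reachG (h : IsSep G X Y S) :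
    Disjoint (reachG G X S) (reachG G Y S) := by
  refine Set.disjoint_left.2 fun v hv ⟨y, hy, hyS, p, hp⟩ => ?_
  exact Set.disjoint_left.1 h.disjoint_reachG
    (mem_reachG_of_walk hv p.reverse (by simpa using hp)) hy

lemma isSep_of_disjoint_reachG (h : Disjoint (reachG G X S) Y) : IsSep G X Y S := by
  intro x y hx hy p
  by_contra! hp
  exact Set.disjoint_left.1 h ⟨x, hx, fun hx => hp x hx p.start_mem_support, p,
    fun w hw hwS => hp w hwS hw⟩ hy

lemma isSep_right : IsSep G X Y Y := fun _ y _ hy p => ⟨y, hy, p.end_mem_support⟩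

lemma IsSep.trans (hS : IsSep G X Y S) (hZ : IsSep G X S Z) : IsSep G X Y Z := by
  classical
  intro x y hx hy p
  obtain ⟨s, hs, hsp⟩ := hS hx hy p
  obtain ⟨z, hz, hzp⟩ := hZ hx hs (p.takeUntil s hsp)
  exact ⟨z, hz, p.support_takeUntil_subset_support hsp hzp⟩

lemma subset_inter_reachG_union (hYX : Y ⊆ X) : Y ⊆ (X ∩ reachG G Y S) ∪ S := fun y hy => by
  by_cases hyS : y ∈ S
  exacts [Or.inr hyS, Or.inl ⟨hYX hy, mem_reachG_of_mem hy hyS⟩]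

lemma exists_walk_to_first_mem {a b : V} (p : G.Walk a b) {B : Set V}
    (h : ∃ w ∈ p.support, w ∈ B) :
    ∃ c ∈ B, ∃ q : G.Walk a c, q.support ⊆ p.support ∧
      ∀ w ∈ q.support, w ≠ c → w ∈ reachG G {a} B := by
  induction p with
  | nil =>
    obtain ⟨w, hw, hwB⟩ := h
    rw [Walk.support_nil, List.mem_singleton] at hw
    exact ⟨_, hw ▸ hwB, .nil, List.Subset.refl _, by simp⟩
  | @cons a a' b hadj p ih =>
    by_cases ha : a ∈ B
    · exact ⟨a, ha, .nil, by simp, by simp⟩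
    obtain ⟨c, hc, q, hsub, hq⟩ := ih <| by
      obtain ⟨w, hw, hwB⟩ := h
      rcases List.mem_cons.1 hw with rfl | hw
      exacts [absurd hwB ha, ⟨w, hw, hwB⟩]
    have hstart : a ∈ reachG G {a} B := mem_reachG_of_mem rfl ha
    refine ⟨c, hc, .cons hadj q, ?_, fun w hw hwc => ?_⟩
    · simpa [Walk.support_cons] using List.cons_subset_cons a hsub
    rcases List.mem_cons.1 hw with rfl | hw
    · exact hstart
    · obtain ⟨_, rfl, ha'B, -⟩ := hq w hw hwc
      exact reachG_singleton_subset (mem_reachG_of_adj hstart hadj ha'B) (hq w hw hwc)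

end Reach

structure Linkage (G : SimpleGraph V) (A B : Set V) (k : ℕ) where
  src : Fin k → V
  dst : Fin k → V
  walk : ∀ i, G.Walk (src i) (dst i)
  src_mem : ∀ i, src i ∈ A
  dst_mem : ∀ i, dst i ∈ B
  pairwise_disjoint : Pairwise fun i j => (walk i).support.Disjoint (walk j).support

namespace Linkage

variable {G H : SimpleGraph V} {A B C : Set V} {k : ℕ}

def StaysIn (L : Linkage G A B k) (P : Set V) : Prop :=
  ∀ i, ∀ w ∈ (L.walk i).support, w ≠ L.dst i → w ∈ P

lemma StaysIn.mono {L : Linkage G A B k} {P Q : Set V} (hL : L.StaysIn P) (h : P ⊆ Q) :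
    L.StaysIn Q :=
  fun i w hw hwd => h (hL i w hw hwd)

def mapLe (L : Linkage G A B k) (h : G ≤ H) : Linkage H A B k where
  src := L.src
  dst := L.dst
  walk i := (L.walk i).mapLe h
  src_mem := L.src_mem
  dst_mem := L.dst_mem
  pairwise_disjoint i j hij := by
    simpa only [Walk.support_mapLe_eq_support] using L.pairwise_disjoint hij

lemma StaysIn.mapLe {L : Linkage G A B k} {P : Set V} (hL : L.StaysIn P) (h : G ≤ H) :
    (L.mapLe h).StaysIn P :=
  fun i w hw => hL i w (by rwa [Linkage.mapLe, Walk.support_mapLe_eq_support] at hw)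

lemma dst_injective (L : Linkage G A B k) : Function.Injective L.dst := by
  intro i j hij
  by_contra hne
  exact L.pairwise_disjoint hne (L.walk i).end_mem_support
    (by rw [hij]; exact (L.walk j).end_mem_support)

lemma exists_dst_eq [Finite V] (L : Linkage G A B k) (hB : B.ncard ≤ k) {b : V} (hb : b ∈ B) :
    ∃ i, L.dst i = b := by
  have hrange : Set.range L.dst = B := Set.eq_of_subset_of_ncard_le
    (Set.range_subset_iff.2 L.dst_mem) (by simpa [Set.ncard_range_of_injective L.dst_injective])
  rw [← hrange] at hb
  exact hb

lemma nonempty_of_le_ncard_inter [Finite V] (h : k ≤ (A ∩ B).ncard) :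
    Nonempty (Linkage G A B k) := by
  classical
  have := Fintype.ofFinite V
  obtain ⟨f⟩ := Function.Embedding.nonempty_of_card_le (α := Fin k) (β := ↥(A ∩ B))
    (by rwa [Fintype.card_fin, ← Nat.card_eq_fintype_card, Nat.card_coe_set_eq])
  refine ⟨⟨fun i => f i, fun i => f i, fun _ => .nil, fun i => (f i).2.1, fun i => (f i).2.2,
    fun i j hij => ?_⟩⟩
  simpa using fun h => hij (f.injective (Subtype.ext h)).symm

lemma exists_staysIn_reachG (L : Linkage G A B k) :
    ∃ L' : Linkage G A B k, L'.StaysIn (reachG G A B) := by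
  have key : ∀ i, ∃ c ∈ B, ∃ q : G.Walk (L.src i) c, q.support ⊆ (L.walk i).support ∧
      ∀ w ∈ q.support, w ≠ c → w ∈ reachG G A B := fun i => by
    obtain ⟨c, hc, q, hsub, hq⟩ :=
      exists_walk_to_first_mem (L.walk i) ⟨_, (L.walk i).end_mem_support, L.dst_mem i⟩
    exact ⟨c, hc, q, hsub, fun w hw hwc =>
      reachG_mono_left (Set.singleton_subset_iff.2 (L.src_mem i)) (hq w hw hwc)⟩
  choose dst hdst walk hsub hreach using key
  exact ⟨⟨L.src, dst, walk, L.src_mem, hdst,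
    fun i j hij =>
      List.disjoint_of_subset_right (hsub j) (List.disjoint_of_subset_left (hsub i)
        (L.pairwise_disjoint hij))⟩, hreach⟩

lemma exists_extend (L : Linkage G A B k) {x y : V} (hxy : G.Adj x y)
    (hy : ∀ i, y ∉ (L.walk i).support) {P : Set V} (hL : L.StaysIn P) (hx : x ∈ P) :
    ∃ L' : Linkage G A (insert y (B \ {x})) k, L'.StaysIn P := by
  have key : ∀ i, ∃ c ∈ insert y (B \ {x}), ∃ q : G.Walk (L.src i) c,
      (∀ w ∈ q.support, w ∈ (L.walk i).support ∨ (w = y ∧ L.dst i = x)) ∧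
      ∀ w ∈ q.support, w ≠ c → w ∈ P := fun i => by
    by_cases hi : L.dst i = x
    · refine ⟨y, Set.mem_insert _ _, (L.walk i).concat (hi ▸ hxy), fun w hw => ?_,
        fun w hw hwy => ?_⟩ <;>
        rw [Walk.support_concat, List.mem_append, List.mem_singleton] at hw
      · exact hw.imp_right (⟨·, hi⟩)
      · rcases hw with hw | rfl
        · by_cases hwd : w = L.dst i
          exacts [hwd ▸ hi ▸ hx, hL i w hw hwd]
        · exact absurd rfl hwy
    · exact ⟨L.dst i, Or.inr ⟨L.dst_mem i, hi⟩, L.walk i, fun w hw => Or.inl hw, hL i⟩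
  choose dst hdst walk hsub hP using key
  refine ⟨⟨L.src, dst, walk, L.src_mem, hdst, fun i j hij w hwi hwj => ?_⟩, hP⟩
  rcases hsub i w hwi with hi | ⟨rfl, hi⟩ <;> rcases hsub j w hwj with hj | ⟨hwy, hj⟩
  · exact L.pairwise_disjoint hij hi hj
  · exact hy i (hwy ▸ hi)
  · exact hy j hj
  · exact hij (L.dst_injective (hi.trans hj.symm))

lemma nonempty_of_join [Finite V] (L₁ : Linkage G A C k) (L₂ : Linkage G B C k)
    (hC : C.ncard ≤ k) {P Q : Set V} (h₁ : L₁.StaysIn P) (h₂ : L₂.StaysIn Q)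
    (hPQ : Disjoint P Q) (hPC : Disjoint P C) (hQC : Disjoint Q C) :
    Nonempty (Linkage G A B k) := by
  choose j hj using fun i => L₂.exists_dst_eq hC (L₁.dst_mem i)
  have hj_inj : Function.Injective j := fun i i' h =>
    L₁.dst_injective ((hj i).symm.trans ((congrArg L₂.dst h).trans (hj i')))
  have hmeet : ∀ i i' w, w ∈ (L₁.walk i).support → w ∈ (L₂.walk i').support →
      w = L₁.dst i ∧ w = L₂.dst i' := by
    intro i i' w h₁w h₂w
    by_contra! hne
    by_cases hw₁ : w = L₁.dst i
    · exact Set.disjoint_left.1 hQC (h₂ i' w h₂w (hne hw₁)) (hw₁ ▸ L₁.dst_mem i)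
    · have hwP := h₁ i w h₁w hw₁
      by_cases hw₂ : w = L₂.dst i'
      · exact Set.disjoint_left.1 hPC hwP (hw₂ ▸ L₂.dst_mem i')
      · exact Set.disjoint_left.1 hPQ hwP (h₂ i' w h₂w hw₂)
  refine ⟨⟨L₁.src, fun i => L₂.src (j i),
    fun i => (L₁.walk i).append ((L₂.walk (j i)).reverse.copy (hj i) rfl),
    L₁.src_mem, fun i => L₂.src_mem (j i), fun i i' hii' w hw hw' => ?_⟩⟩
  simp only [Walk.mem_support_append_iff, Walk.support_copy, Walk.support_reverse,
    List.mem_reverse] at hw hw'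
  rcases hw with hw | hw <;> rcases hw' with hw' | hw'
  · exact L₁.pairwise_disjoint hii' hw hw'
  · obtain ⟨h₁, h₂⟩ := hmeet i (j i') w hw hw'
    exact hii' (L₁.dst_injective (h₁.symm.trans (h₂.trans (hj i'))))
  · obtain ⟨h₁, h₂⟩ := hmeet i' (j i) w hw' hw
    exact hii' (L₁.dst_injective ((h₂.symm.trans h₁).symm.trans (hj i)).symm)
  · exact L₂.pairwise_disjoint (hj_inj.ne hii') hw hw'

end Linkage

section Menger

variable {G G' : SimpleGraph V} {A B S : Set V} {k : ℕ} {x y : V}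

lemma exists_adj_of_isSep_of_not_isSep (hS : IsSep G' A B S) (hG : ¬ IsSep G A B S) :
    ∃ x y, G.Adj x y ∧ ¬ G'.Adj x y ∧ x ∈ reachG G' A S ∧ y ∉ reachG G' A S ∧ y ∉ S := by
  simp only [IsSep, not_forall, not_exists, not_and] at hG
  obtain ⟨a, b, ha, hb, p, hp⟩ := hG
  obtain ⟨d, hd, hx, hy⟩ := p.exists_boundary_dart (reachG G' A S)
    (mem_reachG_of_mem ha fun h => hp _ h p.start_mem_support)
    (fun h => Set.disjoint_left.1 hS.disjoint_reachG h hb)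
  have hyS : d.snd ∉ S := fun h => hp _ h (p.dart_snd_mem_support_of_mem_darts hd)
  exact ⟨d.fst, d.snd, d.adj, fun h => hy (mem_reachG_of_adj hx h hyS), hx, hy, hyS⟩

lemma isSep_of_isSep_insert (hG : ∀ ⦃u v⦄, G.Adj u v → G'.Adj u v ∨ s(u, v) = s(x, y))
    {Z : Set V} (hS : IsSep G' A B S) (hy : y ∉ reachG G' A S)
    (hZ : IsSep G' A (insert x S) Z) : IsSep G A B Z := by
  have hZx := hZ.disjoint_reachG
  have hZS : reachG G' A Z ⊆ reachG G' A S :=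
    reachG_subset_reachG_of_disjoint (hZx.mono_right (Set.subset_insert _ _))
  -- the edge `xy` cannot leave `reachG G' A Z`: `x` is not in it, `y` not even in `reachG G' A S`
  have hreach : reachG G A Z ⊆ reachG G' A Z := by
    refine reachG_subset_of_closed (fun a ha => mem_reachG_of_mem ha.1 ha.2)
      fun u v hu huv hv => ?_
    rcases hG huv with h | h
    · exact mem_reachG_of_adj hu h hv
    · rcases Sym2.eq_iff.1 h with ⟨rfl, rfl⟩ | ⟨rfl, rfl⟩
      · exact absurd (Set.mem_insert u S) (Set.disjoint_left.1 hZx hu)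
      · exact absurd (hZS hu) hy
  exact isSep_of_disjoint_reachG <| hS.disjoint_reachG.mono_left (hreach.trans hZS)

namespace Linkage

lemma exists_into_insert
    (hG : ∀ ⦃u v⦄, G.Adj u v → G'.Adj u v ∨ s(u, v) = s(x, y))
    (ih : ∀ C, (∀ Z, IsSep G' A C Z → k ≤ Z.ncard) → Nonempty (Linkage G' A C k))
    (h : ∀ Z, IsSep G A B Z → k ≤ Z.ncard) (hS : IsSep G' A B S) (hSk : S.ncard < k)
    (hy : y ∉ reachG G' A S) :
    x ∉ S ∧ ∃ L : Linkage G' A (insert x S) k, L.StaysIn (reachG G' A (insert x S)) := by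
  have hsep : ∀ Z, IsSep G' A (insert x S) Z → k ≤ Z.ncard :=
    fun Z hZ => h Z (isSep_of_isSep_insert hG hS hy hZ)
  refine ⟨fun hx => ?_, ?_⟩
  · have := hsep _ isSep_right
    rw [Set.insert_eq_of_mem hx] at this
    omega
  obtain ⟨L⟩ := ih _ hsep
  exact L.exists_staysIn_reachG

/- Göring's step: some edge `xy` of `G` leaves the `A`-side of `S` in `G'`, so `S ∪ {x}` and
`S ∪ {y}` separate `A` from `B` in `G` and have size `k`; in `G'`, `A` links onto `S ∪ {x}` and
`B` onto `S ∪ {y}`, and the two linkages join through `S` and the edge `xy`. -/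
lemma nonempty_of_isSep_lt [Finite V] (hle : G' ≤ G) {e : Sym2 V}
    (he : ∀ ⦃u v⦄, G.Adj u v → ¬ G'.Adj u v → s(u, v) = e)
    (ih : ∀ A' B', (∀ Z, IsSep G' A' B' Z → k ≤ Z.ncard) → Nonempty (Linkage G' A' B' k))
    (h : ∀ Z, IsSep G A B Z → k ≤ Z.ncard) (hS : IsSep G' A B S) (hSk : S.ncard < k) :
    Nonempty (Linkage G A B k) := by
  obtain ⟨x, y, hxy, hxy', hx, hy, hyS⟩ :=
    exists_adj_of_isSep_of_not_isSep hS fun hG => (h S hG).not_gt hSk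
  have hG : ∀ ⦃u v⦄, G.Adj u v → G'.Adj u v ∨ s(u, v) = s(x, y) := fun u v huv =>
    or_iff_not_imp_left.2 fun h' => (he huv h').trans (he hxy hxy').symm
  have hxB : x ∉ reachG G' B S := Set.disjoint_left.1 hS.disjoint_reachG_reachG hx
  obtain ⟨hxS, L₁, hL₁⟩ := exists_into_insert hG (ih A) h hS hSk hy
  obtain ⟨-, L₂, hL₂⟩ := exists_into_insert (x := y) (y := x)
    (fun u v huv => (hG huv).imp_right (·.trans Sym2.eq_swap)) (ih B)
    (fun Z hZ => h Z hZ.symm) hS.symm hSk hxB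
  have hyL₁ : ∀ i, y ∉ ((L₁.mapLe hle).walk i).support := fun i hyi => by
    rw [mapLe, Walk.support_mapLe_eq_support] at hyi
    by_cases hyd : y = L₁.dst i
    · rcases hyd ▸ L₁.dst_mem i with h | h
      exacts [hxy.ne h.symm, hyS h]
    · exact hy (reachG_anti_right (Set.subset_insert _ _) (hL₁ i y hyi hyd))
  have hext := (L₁.mapLe hle).exists_extend hxy hyL₁
    ((hL₁.mono (reachG_anti_right (Set.subset_insert _ _))).mapLe hle) hx
  rw [Set.insert_sdiff_self_of_notMem hxS] at hext
  obtain ⟨L₁', hL₁'⟩ := hext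
  refine nonempty_of_join L₁' (L₂.mapLe hle) ((Set.ncard_insert_le _ _).trans hSk) hL₁'
    (hL₂.mapLe hle) ?_ ?_ ?_
  · exact hS.disjoint_reachG_reachG.mono_right (reachG_anti_right (Set.subset_insert _ _))
  · exact Set.disjoint_left.2 fun v hv hvC =>
      (Set.mem_insert_iff.1 hvC).elim (fun h => hy (h ▸ hv)) (notMem_of_mem_reachG hv)
  · exact Set.disjoint_left.2 fun v hv => notMem_of_mem_reachG hv

theorem nonempty_of_forall_le_ncard [Finite V] (h : ∀ S, IsSep G A B S → k ≤ S.ncard) :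
    Nonempty (Linkage G A B k) := by
  induction hn : G.edgeSet.ncard using Nat.strong_induction_on generalizing G A B with
  | _ n ih =>
  rcases G.edgeSet.eq_empty_or_nonempty with hE | ⟨e, he⟩
  · refine nonempty_of_le_ncard_inter (h _ fun a b ha hb p => ?_)
    cases p with
    | nil => exact ⟨a, ⟨ha, hb⟩, Walk.start_mem_support _⟩
    | cons hab _ => exact absurd (G.mem_edgeSet.2 hab) (hE ▸ Set.notMem_empty _)
  · have hlt : (G.deleteEdges {e}).edgeSet.ncard < n := by
      rw [← hn, edgeSet_deleteEdges]
      exact Set.ncard_sdiff_singleton_lt_of_mem he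
    by_cases h' : ∀ S, IsSep (G.deleteEdges {e}) A B S → k ≤ S.ncard
    · exact (ih _ hlt h' rfl).map (·.mapLe (G.deleteEdges_le _))
    · simp only [not_forall, not_le] at h'
      obtain ⟨S, hS, hSk⟩ := h'
      exact nonempty_of_isSep_lt (G.deleteEdges_le _)
        (fun u v huv h => by simpa [deleteEdges_adj, huv] using h)
        (fun A' B' h' => ih _ hlt h' rfl) h hS hSk

end Linkage

end Menger

lemma setOf_mem_bag_subset {bag : ι → Set V} {l : List V} {x : V} (hx : x ∈ l) :
    {u | x ∈ bag u} ⊆ {u | ∃ y ∈ l, y ∈ bag u} :=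
  fun _ hu => ⟨x, hx, hu⟩

namespace IsTorsoTreeDecomp

variable {G : SimpleGraph V} {X : Set V} {T : SimpleGraph ι} {bag : ι → Set V}

lemma connected_induce_union_walk (hT : IsTorsoTreeDecomp G X T bag) {x₀ a b : V}
    (hx₀ : x₀ ∈ X) (r : G.Walk x₀ a) (hr : ∀ w ∈ r.support, w = x₀ ∨ w ∉ X) (p : G.Walk a b) :
    (T.induce ({u | x₀ ∈ bag u} ∪ {u | ∃ x ∈ p.support, x ∈ bag u})).Connected := by
  have hstart : ∀ {x₀ a : V} (r : G.Walk x₀ a), (∀ w ∈ r.support, w = x₀ ∨ w ∉ X) →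
      {u | a ∈ bag u} ⊆ {u | x₀ ∈ bag u} := fun r hr u hu => by
    rcases hr _ r.end_mem_support with rfl | ha
    exacts [hu, absurd (hT.bag_subset u hu) ha]
  induction p generalizing x₀ with
  | @nil c =>
    have hnil : {u | ∃ x ∈ (Walk.nil : G.Walk c c).support, x ∈ bag u} = {u | c ∈ bag u} := by
      ext; simp
    rw [hnil, Set.union_eq_left.2 (hstart r hr)]
    exact hT.conn x₀ hx₀
  | @cons a a' b h p ih =>
    have hset : {u | x₀ ∈ bag u} ∪ {u | ∃ x ∈ (Walk.cons h p).support, x ∈ bag u} =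
        {u | x₀ ∈ bag u} ∪ {u | ∃ x ∈ p.support, x ∈ bag u} := by
      simp only [Walk.support_cons, List.mem_cons, exists_eq_or_imp, Set.ofPred_or,
        ← Set.union_assoc, Set.union_eq_left.2 (hstart r hr)]
    have hr' : ∀ w ∈ (r.concat h).support, w = x₀ ∨ w = a' ∨ w ∉ X := fun w hw => by
      rw [Walk.support_concat, List.mem_append, List.mem_singleton] at hw
      rcases hw with hw | rfl
      exacts [(hr w hw).imp_right Or.inr, Or.inr (Or.inl rfl)]
    rw [hset]
    by_cases ha' : a' ∈ X ∧ a' ≠ x₀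
    · obtain ⟨u₀, hu₀x, hu₀a⟩ := hT.edge_bag ⟨ha'.2.symm, hx₀, ha'.1, r.concat h, hr'⟩
      have hp := ih ha'.1 .nil (by simp)
      rw [Set.union_eq_right.2 (setOf_mem_bag_subset p.start_mem_support)] at hp
      exact induce_union_connected (hT.conn x₀ hx₀).preconnected hp.preconnected
        ⟨u₀, hu₀x, a', p.start_mem_support, hu₀a⟩
    · exact ih hx₀ (r.concat h) fun w hw => by rcases hr' w hw with h | rfl | h <;> tauto

lemma connected_induce_walk (hT : IsTorsoTreeDecomp G X T bag) {a b : V} (ha : a ∈ X)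
    (p : G.Walk a b) : (T.induce {u | ∃ x ∈ p.support, x ∈ bag u}).Connected := by
  have := hT.connected_induce_union_walk ha .nil (by simp) p
  rwa [Set.union_eq_right.2 (setOf_mem_bag_subset p.start_mem_support)] at this

end IsTorsoTreeDecomp

lemma exists_torsoGraph_adj_of_walk {G : SimpleGraph V} {X : Set V} {u b : V} (hu : u ∈ X)
    (p : G.Walk u b) (h : ∃ w ∈ p.support, w ∈ X \ {u}) :
    ∃ c ∈ p.support, (torsoGraph G X).Adj u c := by
  obtain ⟨c, hc, q, hsub, hq⟩ := exists_walk_to_first_mem p h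
  refine ⟨c, hsub q.end_mem_support, fun h => hc.2 h.symm, hu, hc.1, q, fun w hw => ?_⟩
  by_cases hwc : w = c
  · exact Or.inr (Or.inl hwc)
  · have hw' := notMem_of_mem_reachG (hq w hw hwc)
    by_cases hwu : w = u
    exacts [Or.inl hwu, Or.inr (Or.inr fun hwX => hw' ⟨hwX, hwu⟩)]

section Reroute

variable {G : SimpleGraph V} {X Y Z S : Set V} {T : SimpleGraph ι} {bag : ι → Set V} {k : ℕ}

def reroutedBag (G : SimpleGraph V) (bag : ι → Set V) (Y S : Set V) (L : Linkage G Z S k)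
    (u : ι) : Set V :=
  (bag u ∩ reachG G Y S) ∪ L.dst '' {i | ∃ x ∈ (L.walk i).support, x ∈ bag u}

lemma dst_mem_reroutedBag_iff (L : Linkage G Z S k) {i : Fin k} {u : ι} :
    L.dst i ∈ reroutedBag G bag Y S L u ↔ ∃ x ∈ (L.walk i).support, x ∈ bag u := by
  refine ⟨fun h => ?_, fun h => Or.inr ⟨i, h, rfl⟩⟩
  rcases h with h | ⟨j, hj, hji⟩
  · exact absurd (L.dst_mem i) (notMem_of_mem_reachG h.2)
  · exact L.dst_injective hji ▸ hj

lemma mem_reroutedBag_iff_of_notMem (L : Linkage G Z S k) {v : V} {u : ι} (hv : v ∉ S) :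
    v ∈ reroutedBag G bag Y S L u ↔ v ∈ bag u ∧ v ∈ reachG G Y S := by
  refine ⟨fun h => ?_, Or.inl⟩
  rcases h with h | ⟨j, -, rfl⟩
  exacts [h, absurd (L.dst_mem j) hv]

lemma reroutedBag_subset (L : Linkage G Z S k) (hT : IsTorsoTreeDecomp G X T bag) (u : ι) :
    reroutedBag G bag Y S L u ⊆ (X ∩ reachG G Y S) ∪ S := by
  rintro v (⟨hv, hvR⟩ | ⟨i, -, rfl⟩)
  exacts [Or.inl ⟨hT.bag_subset u hv, hvR⟩, Or.inr (L.dst_mem i)]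

lemma ncard_reroutedBag_le [Finite V] (L : Linkage G Z S k) (hS : IsSep G Z Y S)
    (hL : L.StaysIn (reachG G Z S)) (u : ι) :
    (reroutedBag G bag Y S L u).ncard ≤ (bag u).ncard := by
  classical
  set I := {i | (∃ x ∈ (L.walk i).support, x ∈ bag u) ∧ L.dst i ∉ bag u}
  have hsub : reroutedBag G bag Y S L u ⊆ (bag u ∩ (reachG G Y S ∪ S)) ∪ L.dst '' I := by
    rintro v (⟨hv, hvR⟩ | ⟨i, hi, rfl⟩)
    · exact Or.inl ⟨hv, Or.inl hvR⟩
    · by_cases hiu : L.dst i ∈ bag u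
      exacts [Or.inl ⟨hiu, Or.inr (L.dst_mem i)⟩, Or.inr ⟨i, ⟨hi, hiu⟩, rfl⟩]
  -- the walks of `L` meeting `bag u` but ending outside it meet `bag u` at distinct vertices
  -- of `reachG G Z S`
  have key : ∀ i, ∃ x, i ∈ I → x ∈ (L.walk i).support ∧ x ∈ bag u := fun i =>
    if hi : i ∈ I then hi.1.imp fun _ h _ => h else ⟨L.src i, fun h => absurd h hi⟩
  choose f hf using key
  have hI : I.ncard ≤ (bag u ∩ reachG G Z S).ncard := by
    refine Set.ncard_le_ncard_of_injOn f (fun i hi => ⟨(hf i hi).2, hL i _ (hf i hi).1 ?_⟩)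
      (fun i hi j hj hij => ?_)
    · exact fun h => hi.2 (h ▸ (hf i hi).2)
    · by_contra hne
      exact L.pairwise_disjoint hne (hf i hi).1 (hij ▸ (hf j hj).1)
  have hdisj : Disjoint (bag u ∩ (reachG G Y S ∪ S)) (bag u ∩ reachG G Z S) := by
    refine Set.disjoint_left.2 fun v ⟨_, hv⟩ ⟨_, hvZ⟩ => hv.elim (fun hvY => ?_) ?_
    · exact Set.disjoint_left.1 hS.disjoint_reachG_reachG hvZ hvY
    · exact notMem_of_mem_reachG hvZ
  calc (reroutedBag G bag Y S L u).ncard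
      ≤ (bag u ∩ (reachG G Y S ∪ S)).ncard + (L.dst '' I).ncard :=
        (Set.ncard_le_ncard hsub).trans (Set.ncard_union_le _ _)
    _ ≤ (bag u ∩ (reachG G Y S ∪ S)).ncard + (bag u ∩ reachG G Z S).ncard :=
        Nat.add_le_add_left ((Set.ncard_image_le (Set.toFinite I)).trans hI) _
    _ = ((bag u ∩ (reachG G Y S ∪ S)) ∪ (bag u ∩ reachG G Z S)).ncard :=
        (Set.ncard_union_eq hdisj).symm
    _ ≤ (bag u).ncard :=
        Set.ncard_le_ncard (Set.union_subset Set.inter_subset_left Set.inter_subset_left)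

lemma exists_mem_reroutedBag_of_adj_of_notMem (L : Linkage G Z S k)
    (hT : IsTorsoTreeDecomp G X T bag) {v w : V} (hv : v ∈ X ∩ reachG G Y S) (hwS : w ∉ S)
    (hvw : (torsoGraph G ((X ∩ reachG G Y S) ∪ S)).Adj v w) :
    ∃ u, v ∈ reroutedBag G bag Y S L u ∧ w ∈ reroutedBag G bag Y S L u := by
  obtain ⟨hne, -, hw, p, hp⟩ := hvw
  -- `p` avoids `S`, so it stays in `reachG G Y S` and is a torso path for `X`
  have hpS : ∀ x ∈ p.support, x ∉ S := fun x hx => by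
    rcases hp x hx with rfl | rfl | h
    exacts [notMem_of_mem_reachG hv.2, hwS, fun hxS => h (Or.inr hxS)]
  have hpR : ∀ x ∈ p.support, x ∈ reachG G Y S := fun x hx =>
    reachG_singleton_subset hv.2 (mem_reachG_of_mem_support rfl p hpS hx)
  obtain ⟨u, hvu, hwu⟩ := hT.edge_bag ⟨hne, hv.1, (hw.resolve_right hwS).1, p, fun x hx =>
    (hp x hx).imp_right (Or.imp_right fun h hxX => h (Or.inl ⟨hxX, hpR x hx⟩))⟩
  exact ⟨u, Or.inl ⟨hvu, hv.2⟩, Or.inl ⟨hwu, hpR w p.end_mem_support⟩⟩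

lemma exists_mem_reroutedBag_of_adj_of_mem {t : ι} (L : Linkage G (bag t) S k)
    (hT : IsTorsoTreeDecomp G X T bag) (hS : IsSep G (bag t) Y S)
    (hsurj : ∀ s ∈ S, ∃ i, L.dst i = s) {v w : V} (hv : v ∈ X ∩ reachG G Y S) (hwS : w ∈ S)
    (hvw : (torsoGraph G ((X ∩ reachG G Y S) ∪ S)).Adj v w) :
    ∃ u, v ∈ reroutedBag G bag Y S L u ∧ w ∈ reroutedBag G bag Y S L u := by
  obtain ⟨-, -, -, p, hp⟩ := hvw
  -- go along `p` to `w`, then back along the walk of `L` ending at `w`, into `bag t`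
  obtain ⟨c, hcS, q, hsub, hq⟩ := exists_walk_to_first_mem p ⟨w, p.end_mem_support, hwS⟩
  have hqR : ∀ x ∈ q.support, x ≠ c → x ∈ reachG G Y S :=
    fun x hx hxc => reachG_singleton_subset hv.2 (hq x hx hxc)
  have hqX : ∀ x ∈ q.support, x ∈ X → x ≠ v → x = c := fun x hx hxX hxv => by
    by_contra hxc
    rcases hp x (hsub hx) with h | h | h
    · exact hxv h
    · exact notMem_of_mem_reachG (hqR x hx hxc) (h ▸ hwS)
    · exact h (Or.inl ⟨hxX, hqR x hx hxc⟩)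
  obtain rfl : c = w := by
    rcases hp c (hsub q.end_mem_support) with h | h | h
    exacts [absurd (h ▸ hcS) (notMem_of_mem_reachG hv.2), h, absurd (Or.inr hcS) h]
  obtain ⟨i, rfl⟩ := hsurj c hcS
  have hsrc : L.src i ∈ X \ {v} := ⟨hT.bag_subset t (L.src_mem i), fun h =>
    Set.disjoint_left.1 hS.symm.disjoint_reachG (h ▸ hv.2) (L.src_mem i)⟩
  obtain ⟨c₂, hc₂, hadj⟩ := exists_torsoGraph_adj_of_walk hv.1 (q.append (L.walk i).reverse)
    ⟨_, by simp, hsrc⟩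
  have hc₂i : c₂ ∈ (L.walk i).support := by
    rcases (Walk.mem_support_append_iff _ _).1 hc₂ with h | h
    · exact hqX c₂ h hadj.2.2.1 hadj.1.symm ▸ (L.walk i).end_mem_support
    · simpa using h
  obtain ⟨u, hvu, hc₂u⟩ := hT.edge_bag hadj
  exact ⟨u, Or.inl ⟨hvu, hv.2⟩, (dst_mem_reroutedBag_iff L).2 ⟨c₂, hc₂i, hc₂u⟩⟩

theorem IsTorsoTreeDecomp.reroute {t : ι} (L : Linkage G (bag t) S k)
    (hT : IsTorsoTreeDecomp G X T bag) (hS : IsSep G (bag t) Y S)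
    (hsurj : ∀ s ∈ S, ∃ i, L.dst i = s) :
    IsTorsoTreeDecomp G ((X ∩ reachG G Y S) ∪ S) T (reroutedBag G bag Y S L) := by
  have hroot : ∀ i, L.dst i ∈ reroutedBag G bag Y S L t := fun i =>
    (dst_mem_reroutedBag_iff L).2 ⟨_, (L.walk i).start_mem_support, L.src_mem i⟩
  have hedge : ∀ ⦃v w⦄, v ∈ X ∩ reachG G Y S →
      (torsoGraph G ((X ∩ reachG G Y S) ∪ S)).Adj v w →
      ∃ u, v ∈ reroutedBag G bag Y S L u ∧ w ∈ reroutedBag G bag Y S L u := fun v w hv hvw => by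
    by_cases hwS : w ∈ S
    exacts [exists_mem_reroutedBag_of_adj_of_mem L hT hS hsurj hv hwS hvw,
      exists_mem_reroutedBag_of_adj_of_notMem L hT hv hwS hvw]
  refine ⟨hT.tree, reroutedBag_subset L hT, fun v hv => ?_, fun v w hvw => ?_, fun v hv => ?_⟩
  · by_cases hvS : v ∈ S
    · obtain ⟨i, rfl⟩ := hsurj v hvS
      exact ⟨t, hroot i⟩
    · obtain ⟨u, hu⟩ := hT.mem_bag v (hv.resolve_right hvS).1
      exact ⟨u, Or.inl ⟨hu, (hv.resolve_right hvS).2⟩⟩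
  · by_cases hvS : v ∈ S
    · by_cases hwS : w ∈ S
      · obtain ⟨i, rfl⟩ := hsurj v hvS
        obtain ⟨j, rfl⟩ := hsurj w hwS
        exact ⟨t, hroot i, hroot j⟩
      · obtain ⟨u, hwu, hvu⟩ := hedge (hvw.2.2.1.resolve_right hwS) hvw.symm
        exact ⟨u, hvu, hwu⟩
    · exact hedge (hvw.2.1.resolve_right hvS) hvw
  · by_cases hvS : v ∈ S
    · obtain ⟨i, rfl⟩ := hsurj v hvS
      have hset : {u | L.dst i ∈ reroutedBag G bag Y S L u} =
          {u | ∃ x ∈ (L.walk i).support, x ∈ bag u} :=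
        Set.ext fun u => dst_mem_reroutedBag_iff L
      rw [hset]
      exact hT.connected_induce_walk (hT.bag_subset t (L.src_mem i)) _
    · have hv' := hv.resolve_right hvS
      have hset : {u | v ∈ reroutedBag G bag Y S L u} = {u | v ∈ bag u} :=
        Set.ext fun u => (mem_reroutedBag_iff_of_notMem L hvS).trans (and_iff_left hv'.2)
      rw [hset]
      exact hT.conn v hv'.1

end Reroute

section SetSum

variable [Finite V] (d : V → ℕ) {P Q : Set V}

lemma setSum_mono (h : P ⊆ Q) : setSum d P ≤ setSum d Q :=
  Finset.sum_le_sum_of_subset (Set.Finite.toFinset_subset_toFinset.2 h)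

lemma setSum_union_of_disjoint (h : Disjoint P Q) :
    setSum d (P ∪ Q) = setSum d P + setSum d Q := by
  classical
  unfold setSum
  rw [Set.Finite.toFinset_union P.toFinite Q.toFinite,
    Finset.sum_union (Set.Finite.disjoint_toFinset.2 h)]

lemma setSum_union_le : setSum d (P ∪ Q) ≤ setSum d P + setSum d Q := by
  rw [← Set.union_sdiff_self, setSum_union_of_disjoint d Set.disjoint_sdiff_right]
  exact Nat.add_le_add_left (setSum_mono d Set.sdiff_subset) _

lemma setSum_inter_add_diff : setSum d (P ∩ Q) + setSum d (P \ Q) = setSum d P := by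
  rw [← setSum_union_of_disjoint d Set.disjoint_sdiff_inter.symm, Set.inter_union_sdiff]

lemma ncard_mul_add_setSum (c : ℕ) : P.ncard * c + setSum d P = setSum (fun v => c + d v) P := by
  unfold setSum
  rw [Finset.sum_add_distrib, Finset.sum_const, smul_eq_mul, Set.ncard_eq_toFinset_card P]

lemma setSum_le_ncard_mul {N : ℕ} (hd : ∀ v, d v ≤ N) : setSum d P ≤ P.ncard * N := by
  unfold setSum
  rw [Set.ncard_eq_toFinset_card P]
  exact Finset.sum_le_card_nsmul _ _ _ fun v _ => hd v

lemma ncard_le_setSum (hd : ∀ v, 1 ≤ d v) : P.ncard ≤ setSum d P := by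
  unfold setSum
  rw [Set.ncard_eq_toFinset_card P]
  simpa using Finset.card_nsmul_le_sum _ _ _ fun v _ => hd v

lemma ncard_mul_add_setSum_lt_of_toLex_lt {N k : ℕ} (hd : ∀ v, 1 ≤ d v ∧ d v ≤ N)
    (hQ : Q.ncard ≤ k + 1) (hlt : toLex (P.ncard, setSum d P) < toLex (Q.ncard, setSum d Q)) :
    P.ncard * (N * (k + 1)) + setSum d P < Q.ncard * (N * (k + 1)) + setSum d Q := by
  rcases Prod.Lex.toLex_lt_toLex.1 hlt with hcard | ⟨hcard, hsum⟩
  · have hP := setSum_le_ncard_mul d (P := P) fun v => (hd v).2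
    have hQ' := ncard_le_setSum d (P := Q) fun v => (hd v).1
    have h1 : (P.ncard + 1) * (N * (k + 1)) ≤ Q.ncard * (N * (k + 1)) :=
      Nat.mul_le_mul_right _ hcard
    have h2 : P.ncard * N ≤ k * N := Nat.mul_le_mul_right _ (by omega)
    nlinarith
  · simp only at hcard hsum
    rw [hcard]
    omega

lemma setSum_inter_union_lt {X R S Z : Set V} (hZX : Z ⊆ X) (hZR : Disjoint Z R)
    (hlt : setSum d S < setSum d Z) : setSum d ((X ∩ R) ∪ S) < setSum d X :=
  calc setSum d ((X ∩ R) ∪ S) ≤ setSum d (X ∩ R) + setSum d S := setSum_union_le d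
    _ < setSum d (X ∩ R) + setSum d (X \ R) :=
        Nat.add_lt_add_left (hlt.trans_le (setSum_mono d (Set.subset_sdiff.2 ⟨hZX, hZR⟩))) _
    _ = setSum d X := setSum_inter_add_diff d

end SetSum

/-- Given a torso tree decomposition `(X, (T, bag))` in `G` of width at most `k` covering `W`,
a weight function `d : V → {1, …, n}`, and a pair `(t, S)` witnessing that `bag t` is not
`d`-linked into `W` (i.e. `S` is a `(bag t, W)`-separator with `|S| < |bag t|`, or
`|S| = |bag t|` and `d(S) < d(bag t)`), there is a torso tree decomposition `(X', (T', bag'))`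
covering `W`, of width at most `k`, with at most `|V(T)|` nodes, and with
`φ_d(X') < φ_d(X)` where `φ_d(Z) = |Z|·n·(k+1) + d(Z)`. -/
theorem make_d_linked {V ι : Type} [Fintype V] [Fintype ι]
    (G : SimpleGraph V) (k : ℕ) (W : Set V)
    (X : Set V) (T : SimpleGraph ι) (bag : ι → Set V)
    (hT : IsTorsoTreeDecomp G X T bag) (hcov : W ⊆ X)
    (hwidth : ∀ u, (bag u).ncard ≤ k + 1)
    (d : V → ℕ) (hd : ∀ v, 1 ≤ d v ∧ d v ≤ Fintype.card V)
    (t : ι) (S : Set V) (hS : IsSep G (bag t) W S)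
    (hwit : S.ncard < (bag t).ncard ∨
      (S.ncard = (bag t).ncard ∧ setSum d S < setSum d (bag t))) :
    ∃ (ι' : Type) (_ : Fintype ι') (T' : SimpleGraph ι') (bag' : ι' → Set V) (X' : Set V),
      IsTorsoTreeDecomp G X' T' bag' ∧ W ⊆ X' ∧
      (∀ u, (bag' u).ncard ≤ k + 1) ∧
      Fintype.card ι' ≤ Fintype.card ι ∧
      X'.ncard * Fintype.card V * (k + 1) + setSum d X'
        < X.ncard * Fintype.card V * (k + 1) + setSum d X := by
  obtain ⟨S₀, hS₀, hmin⟩ := Set.exists_min_image {P | IsSep G (bag t) W P}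
    (fun P => toLex (P.ncard, setSum d P)) (Set.toFinite _) ⟨S, hS⟩
  have hcard : ∀ P, IsSep G (bag t) W P → S₀.ncard ≤ P.ncard := fun P hP =>
    (Prod.Lex.le_iff.1 (hmin P hP)).elim le_of_lt fun h => h.1.le
  have hlt : toLex (S₀.ncard, setSum d S₀) < toLex ((bag t).ncard, setSum d (bag t)) :=
    (hmin S hS).trans_lt (Prod.Lex.toLex_lt_toLex.2 hwit)
  obtain ⟨L⟩ := Linkage.nonempty_of_forall_le_ncard fun P hP => hcard P (hS₀.trans hP)
  obtain ⟨L, hL⟩ := L.exists_staysIn_reachG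
  refine ⟨ι, inferInstance, T, reroutedBag G bag W S₀ L, _,
    hT.reroute L hS₀ fun s hs => L.exists_dst_eq le_rfl hs, subset_inter_reachG_union hcov,
    fun u => (ncard_reroutedBag_le L hS₀ hL u).trans (hwidth u), le_rfl, ?_⟩
  rw [mul_assoc, mul_assoc, ncard_mul_add_setSum, ncard_mul_add_setSum]
  refine setSum_inter_union_lt _ (hT.bag_subset t) hS₀.symm.disjoint_reachG.symm ?_
  rw [← ncard_mul_add_setSum, ← ncard_mul_add_setSum]
  exact ncard_mul_add_setSum_lt_of_toLex_lt d hd (hwidth t) hlt
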